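/- Let p be an odd prime, R = F_p[u]/(u^2), θ an automorphism of R, and C a nonzero skew cyclic code of length n over R (a left R[x;θ]-submodule of R[x;θ]/⟨x^n − 1⟩) containing no monic polynomials. Then every polynomial of minimal degree in C has all coefficients in uF_p; that is, a polynomial a(x) of minimal degree in C satisfies a(x) = u·ā(x) for some ā(x) ∈ F_p[x]. -/

import Mathlib

/-! The leading coefficient of `a` is either a unit of `F_p + uF_p` or annihilated by `u`. A unit
is excluded, since rescaling `a` by its inverse would give a monic polynomial of the same degree
in the code. Hence `u·a` lies in the code and has smaller degree than `a`, so minimality forces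
`u·a = 0`, i.e. every coefficient of `a` lies in `uF_p`. -/

open TrivSqZeroExt

theorem RingAut.one_apply' {R : Type*} [Ring R] (b : R) : (1 : RingAut R) b = b := rfl

/-- The skew polynomial ring `R[x;θ]`, as finitely supported coefficient
sequences with multiplication twisted by the ring automorphism `θ`:
`(a x^i) * (b x^j) = a θ^i(b) x^{i+j}`. -/
def SkewPoly (R : Type*) [Ring R] (θ : RingAut R) : Type _ := ℕ →₀ R

namespace SkewPoly

variable {R : Type*} [Ring R] (θ : RingAut R)

/-- The skew-twisted convolution product. -/
noncomputable def mulAux (f g : ℕ →₀ R) : ℕ →₀ R :=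
  f.sum fun i a => g.sum fun j b => Finsupp.single (i + j) (a * (θ ^ i) b)

theorem mulAux_zero_left (g : ℕ →₀ R) : mulAux θ 0 g = 0 := Finsupp.sum_zero_index

theorem mulAux_zero_right (f : ℕ →₀ R) : mulAux θ f 0 = 0 := by
  simp [mulAux, Finsupp.sum_zero_index]

theorem mulAux_add_left (f f' g : ℕ →₀ R) :
    mulAux θ (f + f') g = mulAux θ f g + mulAux θ f' g := by
  unfold mulAux
  apply Finsupp.sum_add_index' <;> intros <;> simp [add_mul, Finsupp.single_add, Finsupp.sum_add]

theorem mulAux_add_right (f g g' : ℕ →₀ R) :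
    mulAux θ f (g + g') = mulAux θ f g + mulAux θ f g' := by
  unfold mulAux
  rw [← Finsupp.sum_add]
  apply Finsupp.sum_congr
  intro i _
  apply Finsupp.sum_add_index' <;> intros <;> simp [mul_add, Finsupp.single_add]

theorem one_mulAux (g : ℕ →₀ R) : mulAux θ (Finsupp.single 0 1) g = g := by
  unfold mulAux
  rw [Finsupp.sum_single_index]
  · simp [RingAut.one_apply', Finsupp.sum_single]
  · simp

theorem mulAux_one (f : ℕ →₀ R) : mulAux θ f (Finsupp.single 0 1) = f := by
  unfold mulAux
  have : ∀ i ∈ f.support, ((Finsupp.single 0 1 : ℕ →₀ R).sum fun j b =>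
      Finsupp.single (i + j) (f i * (θ ^ i) b)) = Finsupp.single i (f i) := by
    intro i _
    rw [Finsupp.sum_single_index] <;> simp
  rw [Finsupp.sum_congr this, Finsupp.sum_single f]

theorem mulAux_single_single (i j : ℕ) (a b : R) :
    mulAux θ (Finsupp.single i a) (Finsupp.single j b) =
      Finsupp.single (i + j) (a * (θ ^ i) b) := by
  unfold mulAux
  rw [Finsupp.sum_single_index, Finsupp.sum_single_index]
  · simp
  · rw [Finsupp.sum_single_index] <;> simp

theorem mulAux_assoc (f g h : ℕ →₀ R) :
    mulAux θ (mulAux θ f g) h = mulAux θ f (mulAux θ g h) := by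
  induction f using Finsupp.induction_linear with
  | zero => simp [mulAux_zero_left]
  | add f f' hf hf' => simp [mulAux_add_left, hf, hf']
  | single i a =>
    induction g using Finsupp.induction_linear with
    | zero => simp [mulAux_zero_left, mulAux_zero_right]
    | add g g' hg hg' => simp [mulAux_add_left, mulAux_add_right, hg, hg']
    | single j b =>
      induction h using Finsupp.induction_linear with
      | zero => simp [mulAux_zero_right]
      | add h h' hh hh' => simp [mulAux_add_right, hh, hh']
      | single k c =>
        rw [mulAux_single_single, mulAux_single_single, mulAux_single_single,
          mulAux_single_single]
        rw [add_assoc, mul_assoc, map_mul, pow_add]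
        rfl

variable {θ}

noncomputable instance : AddCommGroup (SkewPoly R θ) := inferInstanceAs (AddCommGroup (ℕ →₀ R))

/-- Reinterpret a skew polynomial as a finitely supported function. -/
def toFinsupp (f : SkewPoly R θ) : ℕ →₀ R := f

/-- Build a skew polynomial out of a finitely supported function. -/
def ofFinsupp (f : ℕ →₀ R) : SkewPoly R θ := f

noncomputable instance : Ring (SkewPoly R θ) where
  __ := (inferInstance : AddCommGroup (SkewPoly R θ))
  mul f g := mulAux θ (toFinsupp f) (toFinsupp g)
  one := Finsupp.single 0 1
  left_distrib f g h := mulAux_add_right θ (toFinsupp f) (toFinsupp g) (toFinsupp h)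
  right_distrib f g h := mulAux_add_left θ (toFinsupp f) (toFinsupp g) (toFinsupp h)
  zero_mul := mulAux_zero_left θ
  mul_zero := mulAux_zero_right θ
  mul_assoc := mulAux_assoc θ
  one_mul := one_mulAux θ
  mul_one := mulAux_one θ

variable (θ) in
/-- The constant skew polynomial `a`. -/
noncomputable def C (a : R) : SkewPoly R θ := ofFinsupp (Finsupp.single 0 a)

variable (θ) in
/-- The variable `x` of the skew polynomial ring. -/
noncomputable def X : SkewPoly R θ := ofFinsupp (Finsupp.single 1 1)

/-- The `n`-th coefficient of a skew polynomial. -/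
def coeff (f : SkewPoly R θ) (n : ℕ) : R := toFinsupp f n

/-- The degree of a skew polynomial (`⊥` for the zero polynomial). -/
def degree (f : SkewPoly R θ) : WithBot ℕ := (toFinsupp f).support.max

/-- The degree of a skew polynomial as a natural number. -/
def natDegree (f : SkewPoly R θ) : ℕ := WithBot.unbotD 0 (degree f)

/-- The leading coefficient of a skew polynomial. -/
def leadingCoeff (f : SkewPoly R θ) : R := coeff f (natDegree f)

/-- A skew polynomial is monic if its leading coefficient is `1`. -/
def Monic (f : SkewPoly R θ) : Prop := leadingCoeff f = 1

end SkewPoly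

/-- The inclusion of `F_p[x]` into the skew polynomial ring
`(F_p + u F_p)[x;θ]` (coefficientwise `a ↦ a + u·0`); this is the natural
embedding of `F_p[x]` as a subring of `R[x;θ]` since `θ` fixes `F_p`. -/
noncomputable def SkewPoly.ofPoly {p : ℕ}
    (θ : RingAut (DualNumber (ZMod p))) (f : Polynomial (ZMod p)) :
    SkewPoly (DualNumber (ZMod p)) θ :=
  SkewPoly.ofFinsupp
    (Finsupp.mapRange (inl : ZMod p → DualNumber (ZMod p)) (inl_zero (ZMod p)) f.toFinsupp.coeff)

/-- Reduction of a skew polynomial over `F_p + u F_p` modulo `u`, i.e. the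
polynomial in `F_p[x]` whose coefficients are the first components of the
coefficients. -/
noncomputable def SkewPoly.fstPoly {p : ℕ}
    {θ : RingAut (DualNumber (ZMod p))} (f : SkewPoly (DualNumber (ZMod p)) θ) :
    Polynomial (ZMod p) :=
  Polynomial.ofFinsupp (AddMonoidAlgebra.ofCoeff
    (Finsupp.mapRange TrivSqZeroExt.fst fst_zero (SkewPoly.toFinsupp f)))


namespace SkewPoly

variable {R : Type*} [Ring R] {θ : RingAut R}

theorem ext {f g : SkewPoly R θ} (h : ∀ i, coeff f i = coeff g i) : f = g :=
  Finsupp.ext h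

theorem toFinsupp_C_mul (c : R) (f : SkewPoly R θ) :
    toFinsupp (C θ c * f) = Finsupp.mapRange (c * ·) (mul_zero c) (toFinsupp f) := by
  change mulAux θ (Finsupp.single 0 c) (toFinsupp f) = _
  induction toFinsupp f using Finsupp.induction_linear with
  | zero => simp [mulAux_zero_right]
  | add g g' hg hg' => rw [mulAux_add_right, hg, hg', ← Finsupp.mapRange_add (mul_add c)]
  | single j b => rw [mulAux_single_single, Finsupp.mapRange_single, zero_add, pow_zero,
      RingAut.one_apply']

theorem coeff_C_mul (c : R) (f : SkewPoly R θ) (i : ℕ) :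
    coeff (C θ c * f) i = c * coeff f i := by
  rw [coeff, toFinsupp_C_mul, Finsupp.mapRange_apply]
  rfl

theorem degree_C_mul_le (c : R) (f : SkewPoly R θ) : degree (C θ c * f) ≤ degree f := by
  apply Finset.max_mono
  rw [toFinsupp_C_mul]
  exact Finsupp.support_mapRange

theorem coe_le_degree_of_coeff_ne_zero {f : SkewPoly R θ} {i : ℕ} (h : coeff f i ≠ 0) :
    (i : WithBot ℕ) ≤ degree f :=
  Finset.le_max (Finsupp.mem_support_iff.2 h)

theorem degree_eq_natDegree {f : SkewPoly R θ} (hf : f ≠ 0) : degree f = natDegree f := by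
  obtain ⟨d, hd⟩ := Finset.max_of_nonempty
    (Finsupp.support_nonempty_iff.2 hf : (toFinsupp f).support.Nonempty)
  change (toFinsupp f).support.max = (WithBot.unbotD 0 (toFinsupp f).support.max : ℕ)
  rw [hd]
  rfl

theorem leadingCoeff_ne_zero {f : SkewPoly R θ} (hf : f ≠ 0) : leadingCoeff f ≠ 0 :=
  Finsupp.mem_support_iff.1 (Finset.mem_of_max (degree_eq_natDegree hf))

theorem degree_C_mul_of_mul_leadingCoeff_ne_zero {c : R} {f : SkewPoly R θ}
    (h : c * leadingCoeff f ≠ 0) : degree (C θ c * f) = degree f := by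
  refine (degree_C_mul_le c f).antisymm ?_
  have hf : f ≠ 0 := by
    rintro rfl
    exact h (mul_zero c)
  rw [degree_eq_natDegree hf]
  exact coe_le_degree_of_coeff_ne_zero (by rwa [coeff_C_mul])

theorem monic_C_mul_of_mul_leadingCoeff_eq_one [Nontrivial R] {c : R} {f : SkewPoly R θ}
    (h : c * leadingCoeff f = 1) : Monic (C θ c * f) := by
  have hnat : natDegree (C θ c * f) = natDegree f :=
    congrArg (WithBot.unbotD 0) (degree_C_mul_of_mul_leadingCoeff_ne_zero (h ▸ one_ne_zero))
  rw [Monic, leadingCoeff, hnat, coeff_C_mul]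
  exact h

theorem C_mul_eq_zero_or_degree_lt {c : R} {f : SkewPoly R θ} (h : c * leadingCoeff f = 0) :
    C θ c * f = 0 ∨ degree (C θ c * f) < degree f := by
  refine or_iff_not_imp_left.2 fun hg =>
    (degree_C_mul_le c f).lt_of_ne fun hdeg => leadingCoeff_ne_zero hg ?_
  have hnat : natDegree (C θ c * f) = natDegree f := congrArg (WithBot.unbotD 0) hdeg
  rw [leadingCoeff, hnat, coeff_C_mul]
  exact h

end SkewPoly

open DualNumber

theorem DualNumber.isUnit_or_eps_mul_eq_zero {K : Type*} [DivisionRing K] (x : K[ε]) :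
    IsUnit x ∨ ε * x = 0 := by
  rw [isUnit_iff_isUnit_fst, isUnit_iff_ne_zero]
  refine (ne_or_eq x.fst 0).imp_right fun h => ?_
  ext <;> simp [h]

theorem SkewPoly.exists_eq_eps_mul_ofPoly {p : ℕ} {θ : RingAut (DualNumber (ZMod p))}
    {f : SkewPoly (DualNumber (ZMod p)) θ} (h : C θ ε * f = 0) :
    ∃ g : Polynomial (ZMod p), f = C θ ε * ofPoly θ g := by
  refine ⟨Polynomial.ofFinsupp (AddMonoidAlgebra.ofCoeff
    (Finsupp.mapRange snd snd_zero (toFinsupp f))), ext fun i => ?_⟩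
  have hi : ε * coeff f i = 0 := by rw [← coeff_C_mul, h]; rfl
  have hfst : fst (coeff f i) = 0 := by simpa using congrArg snd hi
  rw [coeff_C_mul]
  change coeff f i = ε * inl (snd (coeff f i))
  ext <;> simp [hfst]

open SkewPoly DualNumber in
theorem skew_code_no_monic_min_degree_general (p : ℕ) (hp : p.Prime)
    (θ : RingAut (DualNumber (ZMod p))) (n : ℕ)
    (Code : Submodule (SkewPoly (DualNumber (ZMod p)) θ)
      (SkewPoly (DualNumber (ZMod p)) θ ⧸ Ideal.span {SkewPoly.X θ ^ n - 1}))
    (hnomonic : ∀ f : SkewPoly (DualNumber (ZMod p)) θ,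
      (Ideal.span {SkewPoly.X θ ^ n - 1}).mkQ f ∈ Code →
        SkewPoly.degree f < (n : WithBot ℕ) → ¬ SkewPoly.Monic f)
    (a : SkewPoly (DualNumber (ZMod p)) θ)
    (haC : (Ideal.span {SkewPoly.X θ ^ n - 1}).mkQ a ∈ Code)
    (hadeg : SkewPoly.degree a < (n : WithBot ℕ))
    (hmin : ∀ b : SkewPoly (DualNumber (ZMod p)) θ,
      (Ideal.span {SkewPoly.X θ ^ n - 1}).mkQ b ∈ Code → b ≠ 0 →
        SkewPoly.degree b < (n : WithBot ℕ) → SkewPoly.degree a ≤ SkewPoly.degree b) :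
    ∃ abar : Polynomial (ZMod p), a = SkewPoly.C θ ε * SkewPoly.ofPoly θ abar := by
  have : Fact p.Prime := ⟨hp⟩
  have hmem (c : DualNumber (ZMod p)) : (Ideal.span {X θ ^ n - 1}).mkQ (C θ c * a) ∈ Code := by
    rw [← smul_eq_mul, map_smul]
    exact Code.smul_mem _ haC
  obtain ⟨u, hu⟩ | hε := isUnit_or_eps_mul_eq_zero (leadingCoeff a)
  · have hmonic : Monic (C θ ↑u⁻¹ * a) :=
      monic_C_mul_of_mul_leadingCoeff_eq_one (by rw [← hu, Units.inv_mul])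
    exact absurd hmonic (hnomonic _ (hmem _) ((degree_C_mul_le _ a).trans_lt hadeg))
  · refine exists_eq_eps_mul_ofPoly (by_contra fun hne => ?_)
    have hlt := (C_mul_eq_zero_or_degree_lt hε).resolve_left hne
    exact (hmin _ (hmem ε) hne (hlt.trans hadeg)).not_gt hlt

open SkewPoly DualNumber in
/-- If a nonzero skew cyclic code `C ⊆ R[x;θ]/⟨xⁿ-1⟩` contains no monic
polynomial, then any polynomial of minimal degree in `C` has the form
`u·ā(x)` with `ā(x) ∈ F_p[x]`. -/
theorem skew_code_no_monic_min_degree (p : ℕ) (hp : p.Prime) (hodd : p ≠ 2)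
    (θ : RingAut (DualNumber (ZMod p))) (n : ℕ) (hn : 0 < n)
    (Code : Submodule (SkewPoly (DualNumber (ZMod p)) θ)
      (SkewPoly (DualNumber (ZMod p)) θ ⧸ Ideal.span {SkewPoly.X θ ^ n - 1}))
    (hC : Code ≠ ⊥)
    (hnomonic : ∀ f : SkewPoly (DualNumber (ZMod p)) θ,
      (Ideal.span {SkewPoly.X θ ^ n - 1}).mkQ f ∈ Code →
        SkewPoly.degree f < (n : WithBot ℕ) → ¬ SkewPoly.Monic f)
    (a : SkewPoly (DualNumber (ZMod p)) θ) (ha0 : a ≠ 0)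
    (haC : (Ideal.span {SkewPoly.X θ ^ n - 1}).mkQ a ∈ Code)
    (hadeg : SkewPoly.degree a < (n : WithBot ℕ))
    (hmin : ∀ b : SkewPoly (DualNumber (ZMod p)) θ,
      (Ideal.span {SkewPoly.X θ ^ n - 1}).mkQ b ∈ Code → b ≠ 0 →
        SkewPoly.degree b < (n : WithBot ℕ) → SkewPoly.degree a ≤ SkewPoly.degree b) :
    ∃ abar : Polynomial (ZMod p), a = SkewPoly.C θ ε * SkewPoly.ofPoly θ abar :=
  skew_code_no_monic_min_degree_general p hp θ n Code hnomonic a haC hadeg hmin
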